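/- Let a = (a_{ij}^{αβ}) be a tensor satisfying the symmetries a_{ij}^{αβ} = a_{ji}^{βα} and a_{ij}^{αβ} = a_{αj}^{iβ}, and a_{ij}^{αβ} ξ_i^α ξ_j^β ≥ κ₁|ξ|² for all symmetric ξ, with κ₁ > 0. With μ = κ₁/4, define b_{ij}^{αβ} = a_{ij}^{αβ} + μ δ_{iα} δ_{jβ} − μ δ_{iβ} δ_{jα} − μ δ_{ij} δ_{αβ}. Then b_{ij}^{αβ} ξ_i^α ξ_j^β ≥ (κ₁/8) |ξ + ξᵀ|² for every d×d matrix ξ; in particular b is positive semidefinite as a quadratic form on matrices and vanishes on skew-symmetric matrices. -/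

import Mathlib

/-!
By the two symmetries of `a`, its bilinear form is unchanged when either argument is transposed,
so `a(ξ + ξᵀ, ξ + ξᵀ) = 4 a(ξ, ξ)`, and coercivity on the symmetric matrix `ξ + ξᵀ` gives
`a(ξ, ξ) ≥ (κ₁/4)|ξ + ξᵀ|²`. With `μ = κ₁/4` the three δ-terms contribute
`μ (tr ξ)² − μ (tr(ξ²) + |ξ|²) = μ (tr ξ)² − (μ/2)|ξ + ξᵀ|²`, hence
`b(ξ, ξ) = a(ξ + ξᵀ, ξ + ξᵀ)/4 + μ (tr ξ)² − (κ₁/8)|ξ + ξᵀ|²`: this is at least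
`(κ₁/8)|ξ + ξᵀ|²`, and every term vanishes when `ξᵀ = −ξ`.
-/

open Matrix

section
variable {d : ℕ}

def tensorForm (a : Fin d → Fin d → Fin d → Fin d → ℝ) (ξ η : Matrix (Fin d) (Fin d) ℝ) : ℝ :=
  ∑ i, ∑ j, ∑ α, ∑ β, a i j α β * ξ i α * η j β

variable {a : Fin d → Fin d → Fin d → Fin d → ℝ}

theorem tensorForm_add_left (ξ ξ' η : Matrix (Fin d) (Fin d) ℝ) :
    tensorForm a (ξ + ξ') η = tensorForm a ξ η + tensorForm a ξ' η := by
  simp only [tensorForm, Matrix.add_apply, mul_add, add_mul, Finset.sum_add_distrib]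

theorem tensorForm_add_right (ξ η η' : Matrix (Fin d) (Fin d) ℝ) :
    tensorForm a ξ (η + η') = tensorForm a ξ η + tensorForm a ξ η' := by
  simp only [tensorForm, Matrix.add_apply, mul_add, Finset.sum_add_distrib]

theorem tensorForm_transpose_left (h : ∀ i j α β, a i j α β = a α j i β)
    (ξ η : Matrix (Fin d) (Fin d) ℝ) : tensorForm a ξᵀ η = tensorForm a ξ η := by
  unfold tensorForm
  conv_lhs => enter [2, i]; rw [Finset.sum_comm]
  rw [Finset.sum_comm]
  conv_lhs => enter [2, i]; rw [Finset.sum_comm]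
  simp only [transpose_apply, ← h]

theorem tensorForm_transpose_right (h : ∀ i j α β, a i j α β = a i β α j)
    (ξ η : Matrix (Fin d) (Fin d) ℝ) : tensorForm a ξ ηᵀ = tensorForm a ξ η := by
  unfold tensorForm
  conv_lhs => enter [2, i, 2, j]; rw [Finset.sum_comm]
  conv_lhs => enter [2, i]; rw [Finset.sum_comm]
  conv_lhs => enter [2, i, 2, j]; rw [Finset.sum_comm]
  simp only [transpose_apply, ← h]

theorem tensorForm_add_transpose_self (h₁₃ : ∀ i j α β, a i j α β = a α j i β)
    (h₂₄ : ∀ i j α β, a i j α β = a i β α j) (ξ : Matrix (Fin d) (Fin d) ℝ) :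
    tensorForm a (ξ + ξᵀ) (ξ + ξᵀ) = 4 * tensorForm a ξ ξ := by
  simp only [tensorForm_add_left, tensorForm_add_right, tensorForm_transpose_left h₁₃,
    tensorForm_transpose_right h₂₄]
  ring

theorem tensorForm_delta_trace (c : ℝ) (ξ η : Matrix (Fin d) (Fin d) ℝ) :
    tensorForm (fun i j α β => c * (if i = α then (1:ℝ) else 0) * (if j = β then (1:ℝ) else 0)) ξ η
      = c * ξ.trace * η.trace := by
  simp only [tensorForm, mul_ite, mul_one, mul_zero, ite_mul, zero_mul, mul_assoc,
    Finset.sum_ite_eq, Finset.mem_univ, ↓reduceIte, trace, diag_apply, Finset.mul_sum,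
    Finset.sum_mul]
  exact Finset.sum_comm

theorem tensorForm_delta_swap (c : ℝ) (ξ η : Matrix (Fin d) (Fin d) ℝ) :
    tensorForm (fun i j α β => c * (if i = β then (1:ℝ) else 0) * (if j = α then (1:ℝ) else 0)) ξ η
      = c * (ξ * η).trace := by
  simp [tensorForm, trace, mul_apply, Finset.mul_sum, mul_assoc]

theorem tensorForm_delta_frobenius (c : ℝ) (ξ η : Matrix (Fin d) (Fin d) ℝ) :
    tensorForm (fun i j α β => c * (if i = j then (1:ℝ) else 0) * (if α = β then (1:ℝ) else 0)) ξ η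
      = c * ∑ i, ∑ α, ξ i α * η i α := by
  simp [tensorForm, Finset.mul_sum, mul_assoc]

theorem tensorForm_sub_deltas (c : ℝ) {b : Fin d → Fin d → Fin d → Fin d → ℝ}
    (hb : ∀ i j α β, b i j α β = a i j α β
      + c * (if i = α then (1:ℝ) else 0) * (if j = β then (1:ℝ) else 0)
      - c * (if i = β then (1:ℝ) else 0) * (if j = α then (1:ℝ) else 0)
      - c * (if i = j then (1:ℝ) else 0) * (if α = β then (1:ℝ) else 0))
    (ξ η : Matrix (Fin d) (Fin d) ℝ) :
    tensorForm b ξ η = tensorForm a ξ η + c * ξ.trace * η.trace - c * (ξ * η).trace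
      - c * ∑ i, ∑ α, ξ i α * η i α := by
  rw [← tensorForm_delta_trace, ← tensorForm_delta_swap, ← tensorForm_delta_frobenius]
  simp only [tensorForm, hb, add_mul, sub_mul, Finset.sum_add_distrib, Finset.sum_sub_distrib]

end

theorem sum_sq_add_transpose {d : ℕ} (ξ : Matrix (Fin d) (Fin d) ℝ) :
    ∑ i, ∑ α, ((ξ + ξᵀ) i α) ^ 2 = 2 * (ξ * ξ).trace + 2 * ∑ i, ∑ α, ξ i α * ξ i α := by
  have hswap : ∑ i, ∑ α, ξ α i * ξ α i = ∑ i, ∑ α, ξ i α * ξ i α := Finset.sum_comm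
  calc ∑ i, ∑ α, ((ξ + ξᵀ) i α) ^ 2
      = ∑ i, ∑ α, (2 * (ξ i α * ξ α i) + ξ i α * ξ i α + ξ α i * ξ α i) :=
        Finset.sum_congr rfl fun i _ => Finset.sum_congr rfl fun α _ => by
          rw [Matrix.add_apply, transpose_apply]; ring
    _ = 2 * (ξ * ξ).trace + 2 * ∑ i, ∑ α, ξ i α * ξ i α := by
        simp only [Finset.sum_add_distrib, ← Finset.mul_sum, hswap, trace, diag_apply, mul_apply]
        ring

/-- With `b = a + μδ_{iα}δ_{jβ} − μδ_{iβ}δ_{jα} − μδ_{ij}δ_{αβ}`, `μ = κ₁/4`,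
one has `b ξ ξ ≥ (κ₁/8)|ξ + ξᵀ|²` for every matrix `ξ`; in particular the quadratic
form of `b` is positive semidefinite and vanishes on skew-symmetric matrices. -/
theorem stmt3 (d : ℕ) (κ₁ : ℝ) (hκ : 0 < κ₁)
    (a : Fin d → Fin d → Fin d → Fin d → ℝ)
    (hsym1 : ∀ i j α β, a i j α β = a j i β α)
    (hsym2 : ∀ i j α β, a i j α β = a α j i β)
    (hcoer : ∀ ξ : Matrix (Fin d) (Fin d) ℝ, ξ.IsSymm →
      κ₁ * ∑ i, ∑ α, (ξ i α) ^ 2 ≤ ∑ i, ∑ j, ∑ α, ∑ β, a i j α β * ξ i α * ξ j β)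
    (b : Fin d → Fin d → Fin d → Fin d → ℝ)
    (hb : ∀ i j α β, b i j α β = a i j α β
      + (κ₁ / 4) * (if i = α then (1:ℝ) else 0) * (if j = β then (1:ℝ) else 0)
      - (κ₁ / 4) * (if i = β then (1:ℝ) else 0) * (if j = α then (1:ℝ) else 0)
      - (κ₁ / 4) * (if i = j then (1:ℝ) else 0) * (if α = β then (1:ℝ) else 0)) :
    (∀ ξ : Matrix (Fin d) (Fin d) ℝ,
      (κ₁ / 8) * ∑ i, ∑ α, ((ξ + ξᵀ) i α) ^ 2 ≤
        ∑ i, ∑ j, ∑ α, ∑ β, b i j α β * ξ i α * ξ j β) ∧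
    (∀ ξ : Matrix (Fin d) (Fin d) ℝ,
      0 ≤ ∑ i, ∑ j, ∑ α, ∑ β, b i j α β * ξ i α * ξ j β) ∧
    (∀ ξ : Matrix (Fin d) (Fin d) ℝ, ξᵀ = -ξ →
      ∑ i, ∑ j, ∑ α, ∑ β, b i j α β * ξ i α * ξ j β = 0) := by
  have hsym24 : ∀ i j α β, a i j α β = a i β α j := fun i j α β => by
    rw [hsym1 i j α β, hsym2 j i β α, hsym1 β i j α]
  have hQb : ∀ ξ : Matrix (Fin d) (Fin d) ℝ, tensorForm b ξ ξ
      = tensorForm a (ξ + ξᵀ) (ξ + ξᵀ) / 4 + κ₁ / 4 * ξ.trace ^ 2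
        - κ₁ / 8 * ∑ i, ∑ α, ((ξ + ξᵀ) i α) ^ 2 := fun ξ => by
    rw [tensorForm_sub_deltas (κ₁ / 4) hb, tensorForm_add_transpose_self hsym2 hsym24,
      sum_sq_add_transpose]
    ring
  have hlower : ∀ ξ : Matrix (Fin d) (Fin d) ℝ,
      κ₁ / 8 * ∑ i, ∑ α, ((ξ + ξᵀ) i α) ^ 2 ≤ tensorForm b ξ ξ := fun ξ => by
    have hcoer_sym : κ₁ * ∑ i, ∑ α, ((ξ + ξᵀ) i α) ^ 2 ≤ tensorForm a (ξ + ξᵀ) (ξ + ξᵀ) :=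
      hcoer _ (isSymm_add_transpose_self ξ)
    have htrace_sq : 0 ≤ κ₁ / 4 * ξ.trace ^ 2 := by positivity
    rw [hQb]
    linarith
  refine ⟨hlower, fun ξ => (by positivity : (0 : ℝ) ≤ _).trans (hlower ξ), fun ξ hξ => ?_⟩
  have hsym_part : ξ + ξᵀ = 0 := by rw [hξ, add_neg_cancel]
  have htrace : ξ.trace = 0 := by
    have := trace_transpose ξ
    rw [hξ, trace_neg] at this
    linarith
  change tensorForm b ξ ξ = 0
  rw [hQb, hsym_part, htrace]
  simp [tensorForm]
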